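/- arXiv:2605.03791 — 4 statements merged into one kernel-verified Lean document; each statement's English description precedes it below -/
import Mathlib

section
/- Let Ω ⊆ ℝ^d be an open convex set, let s, ω : Ω → ℝ be C² convex functions with positive definite Hessians at every point, and suppose ω < 0 on Ω. Define Φ : Ω × (0,∞) → ℝ^{d+1} by Φ(y,t) = (∇(s+tω)(y), ∇(s+tω)(y)·y − (s+tω)(y)). Then for all (y,t) ∈ Ω × (0,∞), the absolute value of the Jacobian determinant of Φ at (y,t) equals (−ω(y)) · det(Hess(s+tω)(y)). -/
set_option maxHeartbeats 1000000

open Matrix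

/-- The first `d` coordinates of a point of `ℝ^{d+1}`. -/
def front {d : ℕ} (p : EuclideanSpace ℝ (Fin (d + 1))) : EuclideanSpace ℝ (Fin d) :=
  WithLp.toLp 2 (fun j : Fin d => p j.castSucc)

noncomputable def frontL (d : ℕ) :
    EuclideanSpace ℝ (Fin (d + 1)) →L[ℝ] EuclideanSpace ℝ (Fin d) :=
  LinearMap.toContinuousLinearMap
    { toFun := front
      map_add' := fun _ _ => rfl
      map_smul' := fun _ _ => rfl }

@[simp] lemma front_apply {d : ℕ} (p : EuclideanSpace ℝ (Fin (d+1))) (j : Fin d) :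
    front p j = p j.castSucc := rfl

@[simp] lemma frontL_apply {d : ℕ} (v : EuclideanSpace ℝ (Fin (d+1))) (j : Fin d) :
    frontL d v j = v j.castSucc := rfl

noncomputable def coordP (n : ℕ) (i : Fin n) : EuclideanSpace ℝ (Fin n) →L[ℝ] ℝ :=
  EuclideanSpace.proj i

@[simp] lemma coordP_apply {n : ℕ} (i : Fin n) (x : EuclideanSpace ℝ (Fin n)) :
    coordP n i x = x i := rfl

@[simp] lemma euclin_apply {m n : ℕ} (A : Matrix (Fin m) (Fin n) ℝ)
    (x : EuclideanSpace ℝ (Fin n)) (i : Fin m) :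
    (Matrix.toEuclideanLin A).toContinuousLinearMap x i = ∑ j, A i j * x j := rfl

lemma fse_castSucc {d : ℕ} (i : Fin d) :
    finSumFinEquiv.symm i.castSucc = Sum.inl i := by simp [Fin.castSucc]

lemma fse_last {d : ℕ} : finSumFinEquiv.symm (Fin.last d) = Sum.inr (0 : Fin 1) := by
  rw [show Fin.last d = Fin.natAdd d (0 : Fin 1) from rfl, finSumFinEquiv_symm_apply_natAdd]

lemma swap_sum (d : ℕ) (A : Matrix (Fin d) (Fin d) ℝ) (y u : Fin d → ℝ) :
    ∑ i, (∑ j, A i j * u j) * y i = ∑ j, (∑ i, y i * A i j) * u j := by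
  simp_rw [Finset.sum_mul]
  rw [Finset.sum_comm]
  exact Finset.sum_congr rfl fun i _ => Finset.sum_congr rfl fun j _ => by ring

lemma key_sum (d : ℕ) (A B : Matrix (Fin d) (Fin d) ℝ) (g h y u : Fin d → ℝ) (t τ w : ℝ) :
    (∑ i, (((∑ j, A i j * u j) + (τ * h i + t * ∑ j, B i j * u j)) * y i
        + (g i + t * h i) * u i))
      - ((∑ i, g i * u i) + (τ * w + t * ∑ i, h i * u i))
    = (∑ j, (∑ i, y i * (A i j + t * B i j)) * u j) + ((∑ i, h i * y i) - w) * τ := by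
  have hA := swap_sum d A y u
  have hB := swap_sum d B y u
  have e1 : (∑ i, (((∑ j, A i j * u j) + (τ * h i + t * ∑ j, B i j * u j)) * y i
        + (g i + t * h i) * u i))
      = (∑ i, (∑ j, A i j * u j) * y i) + t * (∑ i, (∑ j, B i j * u j) * y i)
        + τ * (∑ i, h i * y i) + (∑ i, g i * u i) + t * (∑ i, h i * u i) := by
    simp only [Finset.mul_sum, ← Finset.sum_add_distrib]
    exact Finset.sum_congr rfl fun i _ => by
      simp only [mul_assoc, ← Finset.mul_sum]; ring
  have e2 : (∑ j, (∑ i, y i * (A i j + t * B i j)) * u j)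
      = (∑ j, (∑ i, y i * A i j) * u j) + t * (∑ j, (∑ i, y i * B i j) * u j) := by
    simp only [Finset.mul_sum, ← Finset.sum_add_distrib]
    refine Finset.sum_congr rfl fun j _ => ?_
    rw [show (∑ i, y i * (A i j + t * B i j))
        = (∑ i, (y i * A i j + t * (y i * B i j))) from
      Finset.sum_congr rfl fun i _ => by ring, Finset.sum_add_distrib, ← Finset.mul_sum]
    ring
  rw [e1, e2]
  linear_combination hA + t * hB

lemma hasFDerivAt_euclidean {G : Type*} [NormedAddCommGroup G] [NormedSpace ℝ G]
    {n : Type*} [Fintype n] {f : G → EuclideanSpace ℝ n}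
    {L : G →L[ℝ] EuclideanSpace ℝ n} {x : G}
    (h : ∀ i, HasFDerivAt (fun x => f x i) ((EuclideanSpace.proj i).comp L) x) :
    HasFDerivAt f L x := by
  let e : EuclideanSpace ℝ n ≃L[ℝ] (n → ℝ) := EuclideanSpace.equiv n ℝ
  rw [← e.comp_hasFDerivAt_iff]
  exact hasFDerivAt_pi'' fun i => h i

theorem stmt1 (d : ℕ) (Ω : Set (EuclideanSpace ℝ (Fin d)))
    (hΩo : IsOpen Ω) (hΩc : Convex ℝ Ω)
    (s w : EuclideanSpace ℝ (Fin d) → ℝ)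
    (hs : ConvexOn ℝ Ω s) (hw : ConvexOn ℝ Ω w)
    (hsC2 : ContDiffOn ℝ 2 s Ω) (hwC2 : ContDiffOn ℝ 2 w Ω)
    (gs gw : EuclideanSpace ℝ (Fin d) → EuclideanSpace ℝ (Fin d))
    (Hs Hw : EuclideanSpace ℝ (Fin d) → Matrix (Fin d) (Fin d) ℝ)
    (hgs : ∀ y ∈ Ω, HasGradientAt s (gs y) y)
    (hgw : ∀ y ∈ Ω, HasGradientAt w (gw y) y)
    (hHs : ∀ y ∈ Ω, HasFDerivAt gs
      ((Matrix.toEuclideanLin (Hs y)).toContinuousLinearMap) y)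
    (hHw : ∀ y ∈ Ω, HasFDerivAt gw
      ((Matrix.toEuclideanLin (Hw y)).toContinuousLinearMap) y)
    (hHspos : ∀ y ∈ Ω, (Hs y).PosDef) (hHwpos : ∀ y ∈ Ω, (Hw y).PosDef)
    (hwneg : ∀ y ∈ Ω, w y < 0)
    (Φ : EuclideanSpace ℝ (Fin (d + 1)) → EuclideanSpace ℝ (Fin (d + 1)))
    (hΦ : ∀ p : EuclideanSpace ℝ (Fin (d + 1)),
      Φ p = (Fin.snoc
        (fun i : Fin d => gs (front p) i + p (Fin.last d) * gw (front p) i)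
        ((∑ i : Fin d,
            (gs (front p) i + p (Fin.last d) * gw (front p) i) * p i.castSucc) -
          (s (front p) + p (Fin.last d) * w (front p))) : Fin (d + 1) → ℝ)) :
    ∀ p : EuclideanSpace ℝ (Fin (d + 1)), front p ∈ Ω → 0 < p (Fin.last d) →
      |LinearMap.det ((fderiv ℝ Φ p).toLinearMap)| =
        (-(w (front p))) *
          (Hs (front p) + p (Fin.last d) • Hw (front p)).det := by
  intro p hy ht
  classical
  -- the Jacobian matrix
  set Hm : Matrix (Fin d) (Fin d) ℝ := Hs (front p) + p (Fin.last d) • Hw (front p) with hHm_def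
  set Bm : Matrix (Fin d) (Fin 1) ℝ := Matrix.of fun i _ => gw (front p) i with hBm_def
  set Cm : Matrix (Fin 1) (Fin d) ℝ := Matrix.of fun _ j => ∑ i, front p i * Hm i j with hCm_def
  set Dm : Matrix (Fin 1) (Fin 1) ℝ :=
    Matrix.of fun _ _ => (∑ i, gw (front p) i * front p i) - w (front p) with hDm_def
  set M : Matrix (Fin (d + 1)) (Fin (d + 1)) ℝ :=
    (Matrix.fromBlocks Hm Bm Cm Dm).submatrix finSumFinEquiv.symm finSumFinEquiv.symm
    with hM_def
  have hM1 : ∀ i j : Fin d, M i.castSucc j.castSucc = Hm i j := by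
    intro i j; rw [hM_def, Matrix.submatrix_apply, fse_castSucc, fse_castSucc]; rfl
  have hM2 : ∀ i : Fin d, M i.castSucc (Fin.last d) = gw (front p) i := by
    intro i; rw [hM_def, Matrix.submatrix_apply, fse_castSucc, fse_last]; rfl
  have hM3 : ∀ j : Fin d, M (Fin.last d) j.castSucc = ∑ i, front p i * Hm i j := by
    intro j; rw [hM_def, Matrix.submatrix_apply, fse_last, fse_castSucc]; rfl
  have hM4 : M (Fin.last d) (Fin.last d) = (∑ i, gw (front p) i * front p i) - w (front p) := by
    rw [hM_def, Matrix.submatrix_apply, fse_last]; rfl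
  -- derivatives of the building blocks
  have hfr : HasFDerivAt front (frontL d) p := (frontL d).hasFDerivAt
  have hgsF := (hHs _ hy).comp p hfr
  have hgwF := (hHw _ hy).comp p hfr
  have hsF := ((hgs _ hy).hasFDerivAt).comp p hfr
  have hwF := ((hgw _ hy).hasFDerivAt).comp p hfr
  have hlastF : HasFDerivAt (fun q : EuclideanSpace ℝ (Fin (d + 1)) => (q (Fin.last d) : ℝ))
      (coordP (d+1) (Fin.last d)) p :=
    (coordP (d+1) (Fin.last d)).hasFDerivAt
  have hprojF : ∀ i : Fin d, HasFDerivAt (fun q => gs (front q) i)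
      ((coordP d i) ∘L
        ((Matrix.toEuclideanLin (Hs (front p))).toContinuousLinearMap ∘L frontL d)) p :=
    fun i => (coordP d i).hasFDerivAt.comp p hgsF
  have hprojW : ∀ i : Fin d, HasFDerivAt (fun q => gw (front q) i)
      ((coordP d i) ∘L
        ((Matrix.toEuclideanLin (Hw (front p))).toContinuousLinearMap ∘L frontL d)) p :=
    fun i => (coordP d i).hasFDerivAt.comp p hgwF
  set L := (Matrix.toEuclideanLin M).toContinuousLinearMap with hL_def
  have hL : HasFDerivAt Φ L p := by
    apply hasFDerivAt_euclidean
    intro i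
    induction i using Fin.lastCases with
    | cast i =>
      simp only [hΦ, Fin.snoc_castSucc]
      refine (((hprojF i).add (hlastF.mul (hprojW i)))).congr_fderiv ?_
      ext v
      rw [hL_def]
      show (∑ j, Hs (front p) i j * v j.castSucc)
          + (p (Fin.last d) * ∑ j, Hw (front p) i j * v j.castSucc
            + gw (front p) i * v (Fin.last d))
          = ∑ j : Fin (d + 1), M i.castSucc j * v j
      rw [Fin.sum_univ_castSucc]
      simp only [hM1, hM2, hHm_def, Matrix.add_apply, Matrix.smul_apply, smul_eq_mul]
      simp only [add_mul, Finset.sum_add_distrib, mul_assoc, ← Finset.mul_sum]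
      ring
    | last =>
      simp only [hΦ, Fin.snoc_last]
      have hterm : ∀ i : Fin d, i ∈ Finset.univ → HasFDerivAt
          (fun q => (gs (front q) i + q (Fin.last d) * gw (front q) i) * q i.castSucc)
          ((gs (front p) i + p (Fin.last d) * gw (front p) i) • coordP (d+1) i.castSucc +
            p i.castSucc •
              (((coordP d i) ∘L
                ((Matrix.toEuclideanLin (Hs (front p))).toContinuousLinearMap ∘L frontL d)) +
               (p (Fin.last d) •
                  ((coordP d i) ∘L
                    ((Matrix.toEuclideanLin (Hw (front p))).toContinuousLinearMap ∘L frontL d))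
                 + gw (front p) i • coordP (d+1) (Fin.last d))))
          p := by
        intro i _
        exact ((hprojF i).add (hlastF.mul (hprojW i))).mul (coordP (d+1) i.castSucc).hasFDerivAt
      have hsum := HasFDerivAt.fun_sum hterm
      have hrest := hsF.add (hlastF.mul hwF)
      refine (hsum.sub hrest).congr_fderiv ?_
      ext v
      rw [hL_def]
      simp only [ContinuousLinearMap.sum_apply, ContinuousLinearMap.sub_apply,
        ContinuousLinearMap.add_apply, ContinuousLinearMap.smul_apply,
        ContinuousLinearMap.coe_comp', Function.comp_apply, smul_eq_mul,
        coordP_apply, euclin_apply, frontL_apply,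
        InnerProductSpace.toDual_apply_apply, PiLp.inner_apply, RCLike.inner_apply,
        starRingEnd_apply, star_trivial]
      show _ = ∑ j : Fin (d + 1), M (Fin.last d) j * v j
      rw [Fin.sum_univ_castSucc]
      simp only [hM3, hM4, hHm_def, Matrix.add_apply, Matrix.smul_apply, smul_eq_mul,
        front_apply]
      have K := key_sum d (Hs (front p)) (Hw (front p)) (gs (front p)) (gw (front p))
        (fun j => p j.castSucc) (fun j => v j.castSucc) (p (Fin.last d)) (v (Fin.last d))
        (w (front p))
      have eL : (∑ x : Fin d,
          ((gs (front p) x + p (Fin.last d) * gw (front p) x) * v x.castSucc +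
            p x.castSucc *
              (∑ x_1 : Fin d, Hs (front p) x x_1 * v x_1.castSucc +
                (p (Fin.last d) * ∑ x_1 : Fin d, Hw (front p) x x_1 * v x_1.castSucc +
                  gw (front p) x * v (Fin.last d)))))
          = ∑ i : Fin d, (((∑ j, Hs (front p) i j * v j.castSucc) +
              (v (Fin.last d) * gw (front p) i +
                p (Fin.last d) * ∑ j, Hw (front p) i j * v j.castSucc)) * p i.castSucc
            + (gs (front p) i + p (Fin.last d) * gw (front p) i) * v i.castSucc) :=
        Finset.sum_congr rfl fun x _ => by ring
      rw [eL]
      have c1 : ∑ i : Fin d, v i.castSucc * gs (front p) i = ∑ i : Fin d, gs (front p) i * v i.castSucc :=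
        Finset.sum_congr rfl fun i _ => mul_comm _ _
      have c2 : ∑ i : Fin d, v i.castSucc * gw (front p) i = ∑ i : Fin d, gw (front p) i * v i.castSucc :=
        Finset.sum_congr rfl fun i _ => mul_comm _ _
      linear_combination K - c1 - p (Fin.last d) * c2
  rw [hL.fderiv]
  have hdet : LinearMap.det ((L : _ →L[ℝ] _).toLinearMap) = M.det := by
    rw [hL_def]
    rw [LinearMap.coe_toContinuousLinearMap]
    rw [Matrix.toEuclideanLin_eq_toLin, LinearMap.det_toLin]
  rw [hdet]
  -- positive definiteness of the Hessian block
  have hsm : (p (Fin.last d) • Hw (front p)).PosDef := by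
    obtain ⟨h1, h2⟩ := hHwpos _ hy
    constructor
    · show (p (Fin.last d) • Hw (front p))ᴴ = _
      rw [Matrix.conjTranspose_smul, h1.eq]
      simp
    · exact (Matrix.PosDef.smul (hHwpos _ hy) ht).2
  have hpos : Hm.PosDef := by
    rw [hHm_def]; exact (hHspos _ hy).add hsm
  have hdetpos : 0 < Hm.det := hpos.det_pos
  have hu : IsUnit Hm.det := isUnit_iff_ne_zero.mpr hdetpos.ne'
  haveI : Invertible Hm := Hm.invertibleOfIsUnitDet hu
  have hCi : ∀ j, (∑ k, (∑ i, front p i * Hm i k) * (Hm⁻¹) k j) = front p j := by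
    intro j
    have e1 : ∑ k, (∑ i, front p i * Hm i k) * (Hm⁻¹) k j
        = ∑ i, front p i * ∑ k, Hm i k * (Hm⁻¹) k j := by
      simp_rw [Finset.sum_mul]
      rw [Finset.sum_comm]
      simp_rw [Finset.mul_sum]
      exact Finset.sum_congr rfl fun i _ => Finset.sum_congr rfl fun k _ => by ring
    rw [e1]
    have e2 : ∀ i, (∑ k, Hm i k * (Hm⁻¹) k j) = (1 : Matrix (Fin d) (Fin d) ℝ) i j := by
      intro i
      rw [← Matrix.mul_apply, Matrix.mul_nonsing_inv _ hu]
    simp_rw [e2]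
    simp [Matrix.one_apply, Finset.sum_ite_eq]
  have hdetM : M.det = Hm.det * (-(w (front p))) := by
    rw [hM_def, Matrix.det_submatrix_equiv_self, Matrix.det_fromBlocks₁₁]
    congr 1
    rw [Matrix.det_fin_one]
    rw [Matrix.invOf_eq_nonsing_inv]
    simp only [Matrix.sub_apply, Matrix.mul_apply, hDm_def, hBm_def, hCm_def, Matrix.of_apply]
    rw [show (∑ x : Fin d, (∑ x_1 : Fin d, (∑ i : Fin d, front p i * Hm i x_1) * Hm⁻¹ x_1 x)
          * gw (front p) x) = ∑ x : Fin d, front p x * gw (front p) x from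
      Finset.sum_congr rfl fun x _ => by rw [hCi x]]
    rw [show (∑ x : Fin d, front p x * gw (front p) x)
        = ∑ x : Fin d, gw (front p) x * front p x from
      Finset.sum_congr rfl fun x _ => mul_comm _ _]
    ring
  rw [hdetM]
  rw [abs_of_pos (mul_pos hdetpos (neg_pos.mpr (hwneg _ hy)))]
  ring
end

section
/- Let A and B be real symmetric positive semidefinite d×d matrices. Then the function t ↦ det(A + t·B) on ℝ is a polynomial in t of degree at most d all of whose coefficients are nonnegative. If moreover A and B are positive definite, then all d+1 coefficients are strictly positive. -/
open Matrix Polynomial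

namespace Stmt3Aux

variable {d : ℕ}

noncomputable def pdet (A B : Matrix (Fin d) (Fin d) ℝ) : Polynomial ℝ :=
  ((X : ℝ[X]) • B.map C + A.map C).det

lemma eval_pdet (A B : Matrix (Fin d) (Fin d) ℝ) (t : ℝ) :
    (pdet A B).eval t = (A + t • B).det := by
  have h : (pdet A B).eval t = (evalRingHom t) (pdet A B) := rfl
  rw [h, pdet, RingHom.map_det]
  congr 1
  ext i j
  simp [Matrix.map_apply]
  ring

lemma natDegree_pdet_le (A B : Matrix (Fin d) (Fin d) ℝ) :
    (pdet A B).natDegree ≤ d := by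
  simpa [pdet] using Polynomial.natDegree_det_X_add_C_le B A

open scoped MatrixOrder in
set_option maxHeartbeats 1000000 in
lemma key (A B : Matrix (Fin d) (Fin d) ℝ) (hA : A.PosSemidef) (hB : B.PosDef) :
    ∃ μ : Fin d → ℝ, (∀ i, 0 ≤ μ i) ∧ (A.PosDef → ∀ i, 0 < μ i) ∧
      pdet A B = C B.det * ∏ i, (X + C (μ i)) := by
  set S := CFC.sqrt B with hSdef
  have hSps : S.PosSemidef := (CFC.sqrt_nonneg B).posSemidef
  have hSS : S * S = B := CFC.sqrt_mul_sqrt_self B hB.posSemidef.nonneg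
  have hdet2 : S.det * S.det = B.det := by rw [← det_mul, hSS]
  have hdetS : IsUnit S.det := by
    refine isUnit_iff_ne_zero.mpr fun h => ?_
    have := hB.det_pos
    rw [← hdet2, h, mul_zero] at this
    exact lt_irrefl _ this
  have hSH : S.IsHermitian := hSps.isHermitian
  have hSinvH : (S⁻¹).IsHermitian := by
    unfold Matrix.IsHermitian
    rw [conjTranspose_nonsing_inv, hSH.eq]
  set M := S⁻¹ * A * S⁻¹ with hMdef
  have hM : M.PosSemidef := by
    have := hA.conjTranspose_mul_mul_same (B := S⁻¹)
    rwa [hSinvH.eq] at this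
  have hMH : M.IsHermitian := hM.isHermitian
  have hSinv : S * S⁻¹ = 1 := mul_nonsing_inv S hdetS
  have hSinv' : S⁻¹ * S = 1 := nonsing_inv_mul S hdetS
  refine ⟨hMH.eigenvalues, hM.eigenvalues_nonneg, ?_, ?_⟩
  · intro hApd
    have hMpd : M.PosDef := by
      refine Matrix.PosDef.of_dotProduct_mulVec_pos hMH fun x hx => ?_
      have hxS : S⁻¹ *ᵥ x ≠ 0 := by
        intro h
        apply hx
        have : S *ᵥ (S⁻¹ *ᵥ x) = x := by rw [mulVec_mulVec, hSinv, one_mulVec]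
        rw [h, mulVec_zero] at this
        exact this.symm
      have := hApd.dotProduct_mulVec_pos hxS
      have hMeq : M = (S⁻¹)ᴴ * A * S⁻¹ := by rw [hSinvH.eq]
      rw [hMeq]
      simpa only [star_mulVec, dotProduct_mulVec, vecMul_vecMul] using this
    exact hMpd.eigenvalues_pos
  · apply Polynomial.funext
    intro t
    rw [eval_pdet]
    have e1 : S * (S⁻¹ * A * S⁻¹) * S = A := by
      simp only [← mul_assoc]
      rw [hSinv, one_mul, mul_assoc, hSinv', mul_one]
    have e2 : S * (t • (1 : Matrix (Fin d) (Fin d) ℝ)) * S = t • B := by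
      rw [Matrix.mul_smul, Matrix.smul_mul, mul_one, hSS]
    have conj : S * (M + t • 1) * S = A + t • B := by
      rw [hMdef, mul_add, add_mul, e1, e2]
    rw [← conj, det_mul, det_mul, mul_right_comm, mul_comm S.det, hdet2]
    -- now compute det (M + t • 1)
    set U : Matrix (Fin d) (Fin d) ℝ := (hMH.eigenvectorUnitary : Matrix (Fin d) (Fin d) ℝ) with hU
    have hU1 : U * star U = 1 := Matrix.mem_unitaryGroup_iff.mp hMH.eigenvectorUnitary.2
    have hdiag : (Matrix.diagonal (RCLike.ofReal ∘ hMH.eigenvalues) : Matrix (Fin d) (Fin d) ℝ)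
        = Matrix.diagonal hMH.eigenvalues := rfl
    have hspec : M = U * Matrix.diagonal hMH.eigenvalues * star U := by
      rw [← hdiag]; exact hMH.spectral_theorem
    have hd2 : Matrix.diagonal (fun i => hMH.eigenvalues i + t)
        = Matrix.diagonal hMH.eigenvalues + t • 1 := by
      rw [Matrix.smul_one_eq_diagonal, Matrix.diagonal_add]
    have hMt : M + t • 1 = U * Matrix.diagonal (fun i => hMH.eigenvalues i + t) * star U := by
      rw [hd2, mul_add, add_mul, Matrix.mul_smul, Matrix.smul_mul, mul_one, hU1, ← hspec]
    have hU2 : star U * U = 1 := Matrix.mem_unitaryGroup_iff'.mp hMH.eigenvectorUnitary.2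
    rw [hMt, det_mul, det_mul, mul_right_comm, mul_comm U.det, ← det_mul, hU2, det_one, one_mul,
      det_diagonal, eval_mul, eval_C, eval_prod]
    simp [add_comm]

lemma coeff_nonneg_of_posDef (A B : Matrix (Fin d) (Fin d) ℝ) (hA : A.PosSemidef) (hB : B.PosDef)
    {k : ℕ} (hk : k ≤ d) : 0 ≤ (pdet A B).coeff k := by
  obtain ⟨μ, hμ0, -, hform⟩ := key A B hA hB
  rw [hform, coeff_C_mul, Finset.prod_X_add_C_coeff _ _ (by simpa using hk)]
  exact mul_nonneg hB.det_pos.le (Finset.sum_nonneg fun t _ =>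
    Finset.prod_nonneg fun i _ => hμ0 i)

lemma coeff_pos_of_posDef (A B : Matrix (Fin d) (Fin d) ℝ) (hA : A.PosDef) (hB : B.PosDef)
    {k : ℕ} (hk : k ≤ d) : 0 < (pdet A B).coeff k := by
  obtain ⟨μ, -, hμp, hform⟩ := key A B hA.posSemidef hB
  rw [hform, coeff_C_mul, Finset.prod_X_add_C_coeff _ _ (by simpa using hk)]
  refine mul_pos hB.det_pos (Finset.sum_pos (fun t _ => Finset.prod_pos fun i _ => hμp hA i) ?_)
  exact Finset.powersetCard_nonempty.mpr (Nat.sub_le _ _)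

lemma coeff_nonneg (A B : Matrix (Fin d) (Fin d) ℝ) (hA : A.PosSemidef) (hB : B.PosSemidef)
    {k : ℕ} (hk : k ≤ d) : 0 ≤ (pdet A B).coeff k := by
  classical
  set Nbig : Matrix (Fin d) (Fin d) (Polynomial (Polynomial ℝ)) :=
    (X : Polynomial (Polynomial ℝ)) • ((B.map fun b => C (C b)) + Matrix.diagonal fun _ => C X)
      + (A.map fun a => C (C a)) with hN
  set g : Polynomial ℝ := Nbig.det.coeff k with hg
  have hmap : ∀ ε : ℝ, Nbig.map (Polynomial.mapRingHom (evalRingHom ε))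
      = (X : ℝ[X]) • ((B + ε • 1).map C) + A.map C := by
    intro ε
    refine Matrix.ext fun i j => ?_
    by_cases h : i = j <;>
      simp [hN, Matrix.map_apply, Matrix.diagonal_apply, h, Matrix.one_apply,
        Matrix.add_apply, Matrix.smul_apply, coe_mapRingHom, Polynomial.map_add,
        Polynomial.map_mul, Polynomial.map_X, Polynomial.map_C, mul_add]
  have hgev : ∀ ε : ℝ, (pdet A (B + ε • 1)).coeff k = g.eval ε := by
    intro ε
    calc (pdet A (B + ε • 1)).coeff k
        = ((Nbig.map (Polynomial.mapRingHom (evalRingHom ε))).det).coeff k := by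
          rw [hmap, pdet]
      _ = ((Polynomial.mapRingHom (evalRingHom ε)) Nbig.det).coeff k := by
          rw [RingHom.map_det, RingHom.mapMatrix_apply]
      _ = g.eval ε := by rw [coe_mapRingHom, Polynomial.coeff_map]; rfl
  have hpos : ∀ ε : ℝ, 0 < ε → 0 ≤ g.eval ε := by
    intro ε hε
    rw [← hgev]
    refine coeff_nonneg_of_posDef _ _ hA ?_ hk
    refine Matrix.PosDef.posSemidef_add hB ?_
    rw [Matrix.smul_one_eq_diagonal]
    exact Matrix.PosDef.diagonal fun _ => hε
  have ht : Filter.Tendsto (fun ε : ℝ => g.eval ε) (nhdsWithin 0 (Set.Ioi 0))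
      (nhds (g.eval 0)) := (g.continuous.tendsto 0).mono_left nhdsWithin_le_nhds
  have h0 : 0 ≤ g.eval 0 :=
    ge_of_tendsto ht (by filter_upwards [self_mem_nhdsWithin] with x hx using hpos x hx)
  calc (0:ℝ) ≤ g.eval 0 := h0
    _ = (pdet A B).coeff k := by rw [← hgev 0]; norm_num

end Stmt3Aux

open Stmt3Aux in
theorem stmt3 (d : ℕ) (A B : Matrix (Fin d) (Fin d) ℝ)
    (hA : A.PosSemidef) (hB : B.PosSemidef) :
    (∃ c : Fin (d + 1) → ℝ, (∀ i, 0 ≤ c i) ∧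
        ∀ t : ℝ, (A + t • B).det = ∑ i : Fin (d + 1), c i * t ^ (i : ℕ)) ∧
    (A.PosDef → B.PosDef →
      ∃ c : Fin (d + 1) → ℝ, (∀ i, 0 < c i) ∧
        ∀ t : ℝ, (A + t • B).det = ∑ i : Fin (d + 1), c i * t ^ (i : ℕ)) := by
  have hev : ∀ t : ℝ, (A + t • B).det = ∑ i : Fin (d + 1), (pdet A B).coeff i * t ^ (i : ℕ) := by
    intro t
    rw [← eval_pdet,
      Polynomial.eval_eq_sum_range' (Nat.lt_succ_of_le (natDegree_pdet_le A B)) t,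
      Finset.sum_range]
  constructor
  · exact ⟨fun i => (pdet A B).coeff i,
      fun i => coeff_nonneg A B hA hB (Fin.is_le i), hev⟩
  · intro hApd hBpd
    exact ⟨fun i => (pdet A B).coeff i,
      fun i => coeff_pos_of_posDef A B hApd hBpd (Fin.is_le i), hev⟩
end

section
/- Let U ⊆ ℝ^d be a bounded open convex set, let g : cl(U) → ℝ be continuous, and let g** denote the convex envelope of g (the pointwise largest convex function on cl(U) bounded above by g, equal to the Legendre–Fenchel biconjugate of g). Let b = {x ∈ U : g**(x) < g(x)}. Then every point of the subdifferential image ∂g**(b) = ⋃_{x∈b} ∂g**(x) is a point at which the Legendre–Fenchel conjugate g* : ℝ^d → ℝ is not differentiable. Consequently ∂g**(b) has Lebesgue measure zero, i.e. the Monge–Ampère measure of g** vanishes on b. -/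
open Matrix

/-- The subdifferential at `x` of a function `s` relative to a set `Ω`. -/
def subdiffOn {d : ℕ} (Ω : Set (Fin d → ℝ)) (s : (Fin d → ℝ) → ℝ)
    (x : Fin d → ℝ) : Set (Fin d → ℝ) :=
  {y | ∀ x' ∈ Ω, s x + (x' - x) ⬝ᵥ y ≤ s x'}

/-- The Legendre–Fenchel conjugate of `g` relative to a set `S`. -/
noncomputable def fenchelConj {d : ℕ} (S : Set (Fin d → ℝ)) (g : (Fin d → ℝ) → ℝ)
    (y : Fin d → ℝ) : ℝ :=
  sSup {v : ℝ | ∃ x ∈ S, v = x ⬝ᵥ y - g x}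

/-- If `f` is differentiable at `y` and `p` is a global subgradient of `f` at `y`,
then the derivative of `f` at `y` in direction `v` equals `v ⬝ᵥ p`. -/
lemma fderiv_eq_of_subgrad {d : ℕ} {f : (Fin d → ℝ) → ℝ} {y p : Fin d → ℝ}
    (hD : DifferentiableAt ℝ f y) (hp : ∀ y', f y + (y' - y) ⬝ᵥ p ≤ f y')
    (v : Fin d → ℝ) : fderiv ℝ f y v = v ⬝ᵥ p := by
  have hc : HasDerivAt (fun t : ℝ => y + t • v) v 0 := by
    simpa using ((hasDerivAt_id (0 : ℝ)).smul_const v).const_add y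
  have hD' : HasFDerivAt f (fderiv ℝ f y) (y + (0 : ℝ) • v) := by
    simpa using hD.hasFDerivAt
  have hcomp : HasDerivAt (fun t : ℝ => f (y + t • v)) (fderiv ℝ f y v) 0 :=
    hD'.comp_hasDerivAt 0 hc
  have hψ : HasDerivAt (fun t : ℝ => f (y + t • v) - f y - t * (v ⬝ᵥ p))
      (fderiv ℝ f y v - v ⬝ᵥ p) 0 := by
    have h := ((hcomp.sub_const (f y)).sub ((hasDerivAt_id (0 : ℝ)).mul_const (v ⬝ᵥ p)) :
      HasDerivAt (fun t : ℝ => f (y + t • v) - f y - t * (v ⬝ᵥ p)) (fderiv ℝ f y v - 1 * (v ⬝ᵥ p)) 0)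
    rw [one_mul] at h
    exact h
  have hmin : IsLocalMin (fun t : ℝ => f (y + t • v) - f y - t * (v ⬝ᵥ p)) 0 := by
    apply Filter.Eventually.of_forall
    intro t
    have h1 := hp (y + t • v)
    have hdot : (y + t • v - y) ⬝ᵥ p = t * (v ⬝ᵥ p) := by
      have h2 : y + t • v - y = t • v := by abel
      rw [h2, smul_dotProduct, smul_eq_mul]
    simp only [hdot] at h1
    simp only [zero_smul, add_zero, zero_mul]
    linarith
  have h0 := hmin.hasDerivAt_eq_zero hψ
  linarith [h0]

theorem stmt5 (d : ℕ) (U : Set (Fin d → ℝ)) (hUb : Bornology.IsBounded U)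
    (hUo : IsOpen U) (hUc : Convex ℝ U) (hUne : U.Nonempty)
    (g : (Fin d → ℝ) → ℝ) (hg : ContinuousOn g (closure U))
    (gstar gbistar : (Fin d → ℝ) → ℝ)
    (hgstar : gstar = fenchelConj (closure U) g)
    (hgbistar : gbistar = fenchelConj Set.univ gstar)
    (b : Set (Fin d → ℝ)) (hb : b = {x ∈ U | gbistar x < g x}) :
    (∀ y ∈ ⋃ x ∈ b, subdiffOn (closure U) gbistar x, ¬ DifferentiableAt ℝ gstar y) ∧
      MeasureTheory.volume (⋃ x ∈ b, subdiffOn (closure U) gbistar x) = 0 := by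
  have hKne : (closure U).Nonempty := hUne.closure
  have hKcomp : IsCompact (closure U) := hUb.isCompact_closure
  have hcont : ∀ y : Fin d → ℝ, ContinuousOn (fun x' => x' ⬝ᵥ y - g x') (closure U) := by
    intro y
    apply ContinuousOn.sub _ hg
    apply Continuous.continuousOn
    exact continuous_id.dotProduct continuous_const
  have hmax : ∀ y : Fin d → ℝ, ∃ z ∈ closure U,
      ∀ x' ∈ closure U, x' ⬝ᵥ y - g x' ≤ z ⬝ᵥ y - g z := by
    intro y
    obtain ⟨z, hz, hzmax⟩ := hKcomp.exists_isMaxOn hKne (hcont y)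
    exact ⟨z, hz, fun x' hx' => hzmax hx'⟩
  have hle_gstar : ∀ (y x' : Fin d → ℝ), x' ∈ closure U → x' ⬝ᵥ y - g x' ≤ gstar y := by
    intro y x' hx'
    rw [hgstar]
    obtain ⟨z, hz, hzmax⟩ := hmax y
    refine le_csSup ⟨z ⬝ᵥ y - g z, ?_⟩ ⟨x', hx', rfl⟩
    rintro v ⟨x'', hx'', rfl⟩
    exact hzmax x'' hx''
  have hgstar_le : ∀ (y : Fin d → ℝ) (c : ℝ),
      (∀ x' ∈ closure U, x' ⬝ᵥ y - g x' ≤ c) → gstar y ≤ c := by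
    intro y c hc
    rw [hgstar]
    refine csSup_le ⟨hKne.some ⬝ᵥ y - g hKne.some, hKne.some, hKne.some_mem, rfl⟩ ?_
    rintro v ⟨x'', hx'', rfl⟩
    exact hc x'' hx''
  have hgstar_eq : ∀ y : Fin d → ℝ, ∃ z ∈ closure U, gstar y = z ⬝ᵥ y - g z := by
    intro y
    obtain ⟨z, hz, hzm⟩ := hmax y
    exact ⟨z, hz, le_antisymm (hgstar_le y _ hzm) (hle_gstar y z hz)⟩
  have hTbdd : ∀ x ∈ closure U, ∀ v ∈
      {v : ℝ | ∃ y' ∈ (Set.univ : Set (Fin d → ℝ)), v = y' ⬝ᵥ x - gstar y'}, v ≤ g x := by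
    rintro x hx v ⟨y', -, rfl⟩
    have h1 := hle_gstar y' x hx
    have hcomm : y' ⬝ᵥ x = x ⬝ᵥ y' := dotProduct_comm _ _
    linarith
  have hbistar_le_g : ∀ x ∈ closure U, gbistar x ≤ g x := by
    intro x hx
    rw [hgbistar]
    exact csSup_le ⟨(0 : Fin d → ℝ) ⬝ᵥ x - gstar 0, 0, Set.mem_univ _, rfl⟩ (hTbdd x hx)
  have hle_gbistar : ∀ x ∈ closure U, ∀ y' : Fin d → ℝ,
      y' ⬝ᵥ x - gstar y' ≤ gbistar x := by
    intro x hx y'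
    rw [hgbistar]
    exact le_csSup ⟨g x, hTbdd x hx⟩ ⟨y', Set.mem_univ _, rfl⟩
  have key : ∀ y ∈ ⋃ x ∈ b, subdiffOn (closure U) gbistar x, ¬ DifferentiableAt ℝ gstar y := by
    intro y hy hD
    simp only [Set.mem_iUnion] at hy
    obtain ⟨x, hxb, hysub⟩ := hy
    rw [hb] at hxb
    obtain ⟨hxU, hlt⟩ := hxb
    have hxK : x ∈ closure U := subset_closure hxU
    have hB : gstar y ≤ x ⬝ᵥ y - gbistar x := by
      apply hgstar_le
      intro x' hx'
      have h1 := hysub x' hx'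
      have h2 := hbistar_le_g x' hx'
      have h3 : (x' - x) ⬝ᵥ y = x' ⬝ᵥ y - x ⬝ᵥ y := sub_dotProduct _ _ _
      linarith
    have hsubx : ∀ y' : Fin d → ℝ, gstar y + (y' - y) ⬝ᵥ x ≤ gstar y' := by
      intro y'
      have h1 := hle_gbistar x hxK y'
      have h3 : (y' - y) ⬝ᵥ x = y' ⬝ᵥ x - y ⬝ᵥ x := sub_dotProduct _ _ _
      have hcomm : x ⬝ᵥ y = y ⬝ᵥ x := dotProduct_comm _ _
      linarith
    obtain ⟨z, hzK, hzeq⟩ := hgstar_eq y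
    have hsubz : ∀ y' : Fin d → ℝ, gstar y + (y' - y) ⬝ᵥ z ≤ gstar y' := by
      intro y'
      have h1 := hle_gstar y' z hzK
      have h3 : (y' - y) ⬝ᵥ z = y' ⬝ᵥ z - y ⬝ᵥ z := sub_dotProduct _ _ _
      have c1 : z ⬝ᵥ y' = y' ⬝ᵥ z := dotProduct_comm _ _
      have c2 : z ⬝ᵥ y = y ⬝ᵥ z := dotProduct_comm _ _
      linarith
    have hxz : x = z := by
      funext i
      have e1 := fderiv_eq_of_subgrad hD hsubx (Pi.single i 1)
      have e2 := fderiv_eq_of_subgrad hD hsubz (Pi.single i 1)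
      have e3 := e1.symm.trans e2
      simpa [single_dotProduct] using e3
    have h1 := hle_gbistar x hxK y
    have hcomm : y ⬝ᵥ x = x ⬝ᵥ y := dotProduct_comm _ _
    rw [← hxz] at hzeq
    linarith
  refine ⟨key, ?_⟩
  obtain ⟨R, hR⟩ : ∃ R : ℝ, ∀ x' ∈ closure U, ‖x'‖ ≤ R :=
    (isBounded_iff_forall_norm_le.mp hUb.closure)
  set C : ℝ := d * max R 0 with hC
  have hCnn : 0 ≤ C := by positivity
  have hdotbd : ∀ x' ∈ closure U, ∀ v : Fin d → ℝ, x' ⬝ᵥ v ≤ C * ‖v‖ := by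
    intro x' hx' v
    have : x' ⬝ᵥ v = ∑ i, x' i * v i := rfl
    rw [this]
    calc ∑ i, x' i * v i ≤ ∑ _i : Fin d, max R 0 * ‖v‖ := by
          apply Finset.sum_le_sum
          intro i _
          have h1 : |x' i| ≤ max R 0 := by
            have := norm_le_pi_norm x' i
            rw [Real.norm_eq_abs] at this
            exact this.trans ((hR x' hx').trans (le_max_left _ _))
          have h2 : |v i| ≤ ‖v‖ := by
            have := norm_le_pi_norm v i
            rwa [Real.norm_eq_abs] at this
          calc x' i * v i ≤ |x' i * v i| := le_abs_self _
            _ = |x' i| * |v i| := abs_mul _ _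
            _ ≤ max R 0 * ‖v‖ :=
              mul_le_mul h1 h2 (abs_nonneg _) (le_max_right _ _)
      _ = C * ‖v‖ := by
          rw [Finset.sum_const, Finset.card_univ, Fintype.card_fin, nsmul_eq_mul, hC]
          ring
  have hlip : LipschitzWith (Real.toNNReal C) gstar := by
    apply LipschitzWith.of_dist_le_mul
    intro y₁ y₂
    rw [Real.dist_eq, dist_eq_norm, Real.coe_toNNReal _ hCnn]
    have key2 : ∀ u w : Fin d → ℝ, gstar u - gstar w ≤ C * ‖u - w‖ := by
      intro u w
      have h : gstar u ≤ gstar w + C * ‖u - w‖ := by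
        apply hgstar_le
        intro x' hx'
        have h1 := hle_gstar w x' hx'
        have h2 := hdotbd x' hx' (u - w)
        have h3 : x' ⬝ᵥ (u - w) = x' ⬝ᵥ u - x' ⬝ᵥ w := dotProduct_sub _ _ _
        linarith
      linarith
    rw [abs_sub_le_iff]
    have hnorm : ‖y₂ - y₁‖ = ‖y₁ - y₂‖ := norm_sub_rev _ _
    exact ⟨key2 y₁ y₂, by rw [← hnorm]; exact key2 y₂ y₁⟩
  have hae : ∀ᵐ y : Fin d → ℝ ∂MeasureTheory.volume, DifferentiableAt ℝ gstar y :=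
    hlip.ae_differentiableAt
  have hnull : MeasureTheory.volume {y : Fin d → ℝ | ¬ DifferentiableAt ℝ gstar y} = 0 :=
    MeasureTheory.ae_iff.mp hae
  exact MeasureTheory.measure_mono_null (fun y hy => key y hy) hnull
end

section
/- Let U ⊆ ℝ^d be an open convex set and let s : U → ℝ be a C² convex function. Then the Monge–Ampère measure of s equals det(Hess s) times Lebesgue measure; i.e., for every Borel set b ⊆ U, the Lebesgue measure of the subdifferential image ∂s(b) = {∇s(x) : x ∈ b} equals ∫_b det(Hess s(x)) dx. -/
open Matrix MeasureTheory InnerProductSpace Set Topology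

noncomputable section
variable {d : ℕ}

/-- Monotonicity of the gradient of a convex function. -/
lemma grad_mono {U : Set (EuclideanSpace ℝ (Fin d))} (hUc : Convex ℝ U)
    {s : EuclideanSpace ℝ (Fin d) → ℝ} (hs : ConvexOn ℝ U s)
    {gs : EuclideanSpace ℝ (Fin d) → EuclideanSpace ℝ (Fin d)}
    (hgs : ∀ x ∈ U, HasGradientAt s (gs x) x)
    {x y : EuclideanSpace ℝ (Fin d)} (hx : x ∈ U) (hy : y ∈ U) :
    ⟪gs x, y - x⟫_ℝ ≤ ⟪gs y, y - x⟫_ℝ := by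
  set p : ℝ →ᵃ[ℝ] EuclideanSpace ℝ (Fin d) := AffineMap.lineMap x y with hp
  have hps : ∀ t : ℝ, p t = x + t • (y - x) := by
    intro t; simp [hp, AffineMap.lineMap_apply, vsub_eq_sub, vadd_eq_add]; abel
  have hφ : ConvexOn ℝ (p ⁻¹' U) (s ∘ p) := hs.comp_affineMap p
  have h0 : (0:ℝ) ∈ p ⁻¹' U := by simp [mem_preimage, hps, hx]
  have h1 : (1:ℝ) ∈ p ⁻¹' U := by
    simp only [mem_preimage, hps]
    have : x + (1:ℝ) • (y - x) = y := by module
    rw [this]; exact hy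
  have hderiv : ∀ t : ℝ, p t ∈ U → HasDerivAt (s ∘ p) ⟪gs (p t), y - x⟫_ℝ t := by
    intro t ht
    have h1 : HasDerivAt p (y - x) t := by
      have : HasDerivAt (fun u : ℝ => x + u • (y - x)) (y - x) t := by
        simpa using ((hasDerivAt_id t).smul_const (y - x)).const_add x
      exact this.congr_deriv rfl |>.congr_of_eventuallyEq (by filter_upwards with u; rw [hps])
    have h2 := (hgs _ ht).hasFDerivAt
    have := h2.comp_hasDerivAt t h1
    simpa [InnerProductSpace.toDual_apply_apply] using this
  have hp0 : p 0 = x := by rw [hps]; module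
  have hp1 : p 1 = y := by rw [hps]; module
  have hA := hφ.le_slope_of_hasDerivAt h0 h1 one_pos (hderiv 0 h0)
  have hB := hφ.slope_le_of_hasDerivAt h0 h1 one_pos (hderiv 1 h1)
  rw [hp0] at hA; rw [hp1] at hB
  exact hA.trans hB

lemma deriv_nonneg_of_right {h : ℝ → ℝ} {D δ : ℝ} (hD : HasDerivAt h D 0) (hδ : 0 < δ)
    (hge : ∀ t ∈ Ioo (0:ℝ) δ, h 0 ≤ h t) : 0 ≤ D := by
  have T : Filter.Tendsto (slope h 0) (𝓝[>] (0:ℝ)) (𝓝 D) :=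
    (hasDerivAt_iff_tendsto_slope.mp hD).mono_left
      (nhdsWithin_mono _ (fun t ht => ne_of_gt ht))
  refine ge_of_tendsto T ?_
  filter_upwards [Ioo_mem_nhdsGT_of_mem (by simp [hδ] : (0:ℝ) ∈ Ico (0:ℝ) δ)] with t ht
  rw [slope_def_field]
  have := hge t ht
  have h0 : (0:ℝ) < t := ht.1
  rw [div_nonneg_iff]
  left
  exact ⟨by linarith, by linarith⟩

lemma deriv_eq_zero_of_right {h : ℝ → ℝ} {D δ : ℝ} (hD : HasDerivAt h D 0) (hδ : 0 < δ)
    (heq : ∀ t ∈ Ioo (0:ℝ) δ, h t = h 0) : D = 0 := by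
  have h1 : 0 ≤ D := deriv_nonneg_of_right hD hδ (fun t ht => (heq t ht).ge)
  have h2 : 0 ≤ -D := deriv_nonneg_of_right (by simpa using hD.neg) hδ
    (fun t ht => by simp [heq t ht])
  linarith

lemma line_inner_deriv {gs : EuclideanSpace ℝ (Fin d) → EuclideanSpace ℝ (Fin d)}
    {Mclm : EuclideanSpace ℝ (Fin d) →L[ℝ] EuclideanSpace ℝ (Fin d)}
    {x v : EuclideanSpace ℝ (Fin d)} (hM : HasFDerivAt gs Mclm x) :
    HasDerivAt (fun t : ℝ => ⟪v, gs (x + t • v)⟫_ℝ) (⟪v, Mclm v⟫_ℝ) 0 := by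
  have hk : HasDerivAt (fun t : ℝ => x + t • v) v 0 := by
    simpa using ((hasDerivAt_id (0:ℝ)).smul_const v).const_add x
  have hM' : HasFDerivAt gs Mclm ((0:ℝ) • v + x) := by simpa using hM
  have h1 : HasDerivAt (fun t : ℝ => gs (x + t • v)) (Mclm v) 0 := by
    have := (by simpa using hM : HasFDerivAt gs Mclm (x + (0:ℝ) • v)).comp_hasDerivAt 0 hk
    exact this
  have := (innerSL ℝ v).hasFDerivAt.comp_hasDerivAt 0 h1
  simpa [Function.comp_def] using this



lemma qform_nonneg {U : Set (EuclideanSpace ℝ (Fin d))} (hUo : IsOpen U)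
    {gs : EuclideanSpace ℝ (Fin d) → EuclideanSpace ℝ (Fin d)}
    (hmono : ∀ x ∈ U, ∀ y ∈ U, ⟪gs x, y - x⟫_ℝ ≤ ⟪gs y, y - x⟫_ℝ)
    {Mclm : EuclideanSpace ℝ (Fin d) →L[ℝ] EuclideanSpace ℝ (Fin d)}
    {x : EuclideanSpace ℝ (Fin d)} (hx : x ∈ U) (hM : HasFDerivAt gs Mclm x)
    (v : EuclideanSpace ℝ (Fin d)) : 0 ≤ ⟪v, Mclm v⟫_ℝ := by
  obtain ⟨ε, hε, hball⟩ := Metric.isOpen_iff.mp hUo x hx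
  rcases eq_or_ne v 0 with rfl | hv
  · simp
  have hvn : 0 < ‖v‖ := norm_pos_iff.mpr hv
  set δ := ε / ‖v‖ with hδdef
  have hδ : 0 < δ := div_pos hε hvn
  refine deriv_nonneg_of_right (line_inner_deriv hM) hδ ?_
  intro t ht
  have hmem : x + t • v ∈ U := by
    apply hball
    simp only [Metric.mem_ball, dist_eq_norm]
    have : ‖x + t • v - x‖ = t * ‖v‖ := by
      rw [show x + t • v - x = t • v by abel, norm_smul, Real.norm_eq_abs,
        abs_of_pos ht.1]
    rw [this]
    calc t * ‖v‖ < δ * ‖v‖ := by exact mul_lt_mul_of_pos_right ht.2 hvn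
      _ = ε := by rw [hδdef, div_mul_cancel₀ _ hvn.ne']
  have h2 := hmono x hx _ hmem
  have h3 : x + t • v - x = t • v := by abel
  rw [h3, real_inner_smul_right, real_inner_smul_right] at h2
  have h4 : ⟪gs x, v⟫_ℝ ≤ ⟪gs (x + t • v), v⟫_ℝ := by
    have := le_of_mul_le_mul_left (show t * ⟪gs x, v⟫_ℝ ≤ t * ⟪gs (x + t • v), v⟫_ℝ by linarith) ht.1
    exact this
  have e1 : ⟪v, gs x⟫_ℝ = ⟪gs x, v⟫_ℝ := real_inner_comm _ _
  have e2 : ⟪v, gs (x + t • v)⟫_ℝ = ⟪gs (x + t • v), v⟫_ℝ := real_inner_comm _ _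
  have hx0 : x + (0:ℝ) • v = x := by module
  rw [hx0]
  linarith



lemma qform_zero {U : Set (EuclideanSpace ℝ (Fin d))} (hUc : Convex ℝ U)
    {gs : EuclideanSpace ℝ (Fin d) → EuclideanSpace ℝ (Fin d)}
    (hmono : ∀ x ∈ U, ∀ y ∈ U, ⟪gs x, y - x⟫_ℝ ≤ ⟪gs y, y - x⟫_ℝ)
    {Mclm : EuclideanSpace ℝ (Fin d) →L[ℝ] EuclideanSpace ℝ (Fin d)}
    {x y : EuclideanSpace ℝ (Fin d)} (hx : x ∈ U) (hy : y ∈ U)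
    (hM : HasFDerivAt gs Mclm x) (hxy : gs x = gs y) :
    ⟪y - x, Mclm (y - x)⟫_ℝ = 0 := by
  set v := y - x with hv
  set h : ℝ → ℝ := fun t => ⟪v, gs (x + t • v)⟫_ℝ with hh
  have hmemU : ∀ t ∈ Icc (0:ℝ) 1, x + t • v ∈ U := fun t ht =>
    hUc.add_smul_sub_mem hx hy ht
  have hmonoh : ∀ t ∈ Icc (0:ℝ) 1, ∀ t' ∈ Icc (0:ℝ) 1, t ≤ t' → h t ≤ h t' := by
    intro t ht t' ht' htt'
    rcases eq_or_lt_of_le htt' with rfl | hlt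
    · exact le_rfl
    have h2 := hmono _ (hmemU t ht) _ (hmemU t' ht')
    have h3 : x + t' • v - (x + t • v) = (t' - t) • v := by
      rw [sub_smul]; abel
    rw [h3, real_inner_smul_right, real_inner_smul_right] at h2
    have h5 := le_of_mul_le_mul_left h2 (show (0:ℝ) < t' - t by linarith)
    have e1 : ⟪v, gs (x + t • v)⟫_ℝ = ⟪gs (x + t • v), v⟫_ℝ := real_inner_comm _ _
    have e2 : ⟪v, gs (x + t' • v)⟫_ℝ = ⟪gs (x + t' • v), v⟫_ℝ := real_inner_comm _ _
    simp only [hh]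
    linarith
  have hend : h 1 = h 0 := by
    simp only [hh]
    rw [show x + (1:ℝ) • v = y by rw [hv]; module, show x + (0:ℝ) • v = x by module, hxy]
  have heq : ∀ t ∈ Ioo (0:ℝ) 1, h t = h 0 := by
    intro t ht
    have h1 := hmonoh 0 (by norm_num) t ⟨ht.1.le, ht.2.le⟩ ht.1.le
    have h2 := hmonoh t ⟨ht.1.le, ht.2.le⟩ 1 (by norm_num) ht.2.le
    rw [hend] at h2
    linarith
  have := deriv_eq_zero_of_right (line_inner_deriv hM) one_pos heq
  exact this

lemma hess_symm {U : Set (EuclideanSpace ℝ (Fin d))} (hUo : IsOpen U)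
    {s : EuclideanSpace ℝ (Fin d) → ℝ}
    {gs : EuclideanSpace ℝ (Fin d) → EuclideanSpace ℝ (Fin d)}
    (hgs : ∀ x ∈ U, HasGradientAt s (gs x) x)
    {Mclm : EuclideanSpace ℝ (Fin d) →L[ℝ] EuclideanSpace ℝ (Fin d)}
    {x : EuclideanSpace ℝ (Fin d)} (hx : x ∈ U) (hM : HasFDerivAt gs Mclm x)
    (v w : EuclideanSpace ℝ (Fin d)) : ⟪Mclm v, w⟫_ℝ = ⟪Mclm w, v⟫_ℝ := by
  set T : EuclideanSpace ℝ (Fin d) →L[ℝ] (EuclideanSpace ℝ (Fin d) →L[ℝ] ℝ) :=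
    (toDual ℝ (EuclideanSpace ℝ (Fin d))).toContinuousLinearEquiv.toContinuousLinearMap with hT
  have hf : ∀ᶠ y in nhds x, HasFDerivAt s (T (gs y)) y := by
    filter_upwards [hUo.mem_nhds hx] with y hy
    exact (hgs y hy).hasFDerivAt
  have hx' : HasFDerivAt (fun y => T (gs y)) (T.comp Mclm) x := T.hasFDerivAt.comp x hM
  have := second_derivative_symmetric_of_eventually hf hx' v w
  simpa [hT, toDual_apply_apply] using this

lemma apply_eq_zero_of_qform_eq_zero
    {M : EuclideanSpace ℝ (Fin d) →L[ℝ] EuclideanSpace ℝ (Fin d)}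
    (hsym : ∀ v w, ⟪M v, w⟫_ℝ = ⟪M w, v⟫_ℝ)
    (hpsd : ∀ v, 0 ≤ ⟪v, M v⟫_ℝ)
    {v : EuclideanSpace ℝ (Fin d)} (hv : ⟪v, M v⟫_ℝ = 0) : M v = 0 := by
  have key : ∀ w, ⟪w, M v⟫_ℝ = 0 := by
    intro w
    set a := ⟪w, M v⟫_ℝ with ha
    set c := ⟪w, M w⟫_ℝ with hc
    have hc0 : 0 ≤ c := hpsd w
    have hq : ∀ t : ℝ, 0 ≤ 2 * t * a + t ^ 2 * c := by
      intro t
      have h0 := hpsd (v + t • w)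
      have hexp : M (v + t • w) = M v + t • M w := by
        rw [map_add, ContinuousLinearMap.map_smul]
      rw [hexp] at h0
      have e1 : ⟪v + t • w, M v + t • M w⟫_ℝ
          = ⟪v, M v⟫_ℝ + t * ⟪v, M w⟫_ℝ + t * ⟪w, M v⟫_ℝ + t ^ 2 * ⟪w, M w⟫_ℝ := by
        rw [inner_add_left, inner_add_right, inner_add_right, real_inner_smul_left,
          real_inner_smul_left, real_inner_smul_right, real_inner_smul_right]
        ring
      rw [e1] at h0
      have e2 : ⟪v, M w⟫_ℝ = a := by
        rw [ha]
        calc ⟪v, M w⟫_ℝ = ⟪M w, v⟫_ℝ := real_inner_comm _ _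
          _ = ⟪M v, w⟫_ℝ := hsym w v
          _ = ⟪w, M v⟫_ℝ := real_inner_comm _ _
      have e3 : ⟪w, M v⟫_ℝ = a := ha.symm
      rw [e2, e3, ← hc, hv] at h0
      linarith
    -- conclude a = 0
    by_contra hne
    have hq' := hq (-(a / (c + 1)))
    have hcpos : (0:ℝ) < c + 1 := by linarith
    have expand : 2 * (-(a / (c + 1))) * a + (-(a / (c + 1))) ^ 2 * c
        = -(a ^ 2 * (c + 2)) / (c + 1) ^ 2 := by
      field_simp
      ring
    rw [expand] at hq'
    have h2 : (0:ℝ) < (c + 1) ^ 2 := by positivity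
    have h3 : (0:ℝ) ≤ -(a ^ 2 * (c + 2)) := by
      have hm := mul_nonneg hq' (le_of_lt h2)
      rwa [div_mul_cancel₀ _ (ne_of_gt h2)] at hm
    have h4 : (0:ℝ) < a ^ 2 := by positivity
    nlinarith
  have := key (M v)
  rwa [real_inner_self_eq_norm_sq, pow_eq_zero_iff, norm_eq_zero] at this
  norm_num

lemma det_clm_eq (M : Matrix (Fin d) (Fin d) ℝ) :
    ContinuousLinearMap.det ((Matrix.toEuclideanLin M).toContinuousLinearMap) = M.det := by
  rw [ContinuousLinearMap.det, LinearMap.coe_toContinuousLinearMap,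
    Matrix.toEuclideanLin_eq_toLin, LinearMap.det_toLin]

lemma det_eq_zero_of_apply_eq_zero {M : Matrix (Fin d) (Fin d) ℝ}
    {v : EuclideanSpace ℝ (Fin d)} (hv : v ≠ 0)
    (h : Matrix.toEuclideanLin M v = 0) : M.det = 0 := by
  rw [← Matrix.exists_mulVec_eq_zero_iff]
  refine ⟨(WithLp.equiv 2 _) v, ?_, ?_⟩
  · simpa using hv
  · have := congrArg (WithLp.equiv 2 (Fin d → ℝ)) h
    simpa [Matrix.toEuclideanLin_apply] using this

lemma inner_toEuclideanLin (M : Matrix (Fin d) (Fin d) ℝ) (v w : EuclideanSpace ℝ (Fin d)) :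
    ⟪v, Matrix.toEuclideanLin M w⟫_ℝ = (fun i => v i) ⬝ᵥ (M *ᵥ (fun i => w i)) := by
  simp [Matrix.toEuclideanLin_apply, PiLp.inner_apply, dotProduct, mulVec, Matrix.mulVec]
  exact Finset.sum_congr rfl fun _ _ => mul_comm _ _

lemma psd_of_qform {M : Matrix (Fin d) (Fin d) ℝ}
    (hsym : ∀ v w : EuclideanSpace ℝ (Fin d),
      ⟪Matrix.toEuclideanLin M v, w⟫_ℝ = ⟪Matrix.toEuclideanLin M w, v⟫_ℝ)
    (hpsd : ∀ v : EuclideanSpace ℝ (Fin d), 0 ≤ ⟪v, Matrix.toEuclideanLin M v⟫_ℝ) :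
    M.PosSemidef := by
  rw [Matrix.posSemidef_iff_dotProduct_mulVec]
  constructor
  · -- Hermitian
    ext i j
    have h := hsym (EuclideanSpace.single j 1) (EuclideanSpace.single i 1)
    have h' : ⟪EuclideanSpace.single i (1:ℝ), Matrix.toEuclideanLin M (EuclideanSpace.single j 1)⟫_ℝ
        = ⟪EuclideanSpace.single j (1:ℝ), Matrix.toEuclideanLin M (EuclideanSpace.single i 1)⟫_ℝ :=
      (real_inner_comm _ _).trans (h.trans (real_inner_comm _ _))
    rw [inner_toEuclideanLin, inner_toEuclideanLin] at h'
    simpa [dotProduct, EuclideanSpace.single, Matrix.mulVec, dotProduct, Pi.single_apply,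
      mul_ite, ite_mul, zero_mul, mul_zero, Finset.sum_ite_eq, Finset.sum_ite_eq',
      mul_comm] using h'.symm
  · intro x
    have h := hpsd ((WithLp.equiv 2 (Fin d → ℝ)).symm x)
    rw [inner_toEuclideanLin] at h
    simpa [dotProduct] using h

lemma toEuclideanLin_entry (M : Matrix (Fin d) (Fin d) ℝ) (i j : Fin d) :
    (Matrix.toEuclideanLin M) (EuclideanSpace.single j 1) i = M i j := by
  simp only [Matrix.toEuclideanLin_apply]
  show (M *ᵥ (WithLp.equiv 2 (Fin d → ℝ)) (EuclideanSpace.single j 1)) i = M i j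
  have : (WithLp.equiv 2 (Fin d → ℝ)) (EuclideanSpace.single j 1) = Pi.single j 1 := by
    rfl
  rw [this, Matrix.mulVec_single]
  exact mul_one _

lemma det_hess_continuousOn {U : Set (EuclideanSpace ℝ (Fin d))} (hUo : IsOpen U)
    {s : EuclideanSpace ℝ (Fin d) → ℝ} (hsC2 : ContDiffOn ℝ 2 s U)
    {gs : EuclideanSpace ℝ (Fin d) → EuclideanSpace ℝ (Fin d)}
    {Hs : EuclideanSpace ℝ (Fin d) → Matrix (Fin d) (Fin d) ℝ}
    (hgs : ∀ x ∈ U, HasGradientAt s (gs x) x)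
    (hHs : ∀ x ∈ U, HasFDerivAt gs ((Matrix.toEuclideanLin (Hs x)).toContinuousLinearMap) x) :
    ContinuousOn (fun x => (Hs x).det) U := by
  have hgseq : ∀ x ∈ U, gs x = (toDual ℝ (EuclideanSpace ℝ (Fin d))).symm (fderiv ℝ s x) := by
    intro x hx
    have h := (hgs x hx).hasFDerivAt.fderiv
    rw [h, LinearIsometryEquiv.symm_apply_apply]
  have h1 : ContDiffOn ℝ 1 (fderiv ℝ s) U := hsC2.fderiv_of_isOpen hUo (by norm_num)
  have h2 : ContDiffOn ℝ 1 gs U := by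
    refine ContDiffOn.congr ?_ hgseq
    exact (toDual ℝ (EuclideanSpace ℝ (Fin d))).symm.toContinuousLinearEquiv.contDiff.comp_contDiffOn h1
  have h3 : ContinuousOn (fderiv ℝ gs) U := h2.continuousOn_fderiv_of_isOpen hUo (le_refl 1)
  have hΦ : Continuous (fun f : EuclideanSpace ℝ (Fin d) →L[ℝ] EuclideanSpace ℝ (Fin d) =>
      (Matrix.of fun i j => f (EuclideanSpace.single j 1) i).det) := by
    apply Continuous.matrix_det
    apply continuous_matrix
    intro i j
    exact (EuclideanSpace.proj i).continuous.comp
      (ContinuousLinearMap.apply ℝ (EuclideanSpace ℝ (Fin d)) (EuclideanSpace.single j 1)).continuous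
  refine ContinuousOn.congr (hΦ.comp_continuousOn h3) ?_
  intro x hx
  have h4 : fderiv ℝ gs x = (Matrix.toEuclideanLin (Hs x)).toContinuousLinearMap :=
    (hHs x hx).fderiv
  simp only [Function.comp, h4]
  congr 1
  ext i j
  simpa using (toEuclideanLin_entry (Hs x) i j).symm


lemma posSemidef_det_nonneg {M : Matrix (Fin d) (Fin d) ℝ} (h : M.PosSemidef) : 0 ≤ M.det := by
  rw [h.1.det_eq_prod_eigenvalues]
  have : ∀ i ∈ Finset.univ, (0:ℝ) ≤ h.1.eigenvalues i := fun i _ => h.eigenvalues_nonneg i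
  simpa using Finset.prod_nonneg this

theorem stmt14 (d : ℕ) (U : Set (EuclideanSpace ℝ (Fin d)))
    (hUo : IsOpen U) (hUc : Convex ℝ U)
    (s : EuclideanSpace ℝ (Fin d) → ℝ) (hs : ConvexOn ℝ U s)
    (hsC2 : ContDiffOn ℝ 2 s U)
    (gs : EuclideanSpace ℝ (Fin d) → EuclideanSpace ℝ (Fin d))
    (Hs : EuclideanSpace ℝ (Fin d) → Matrix (Fin d) (Fin d) ℝ)
    (hgs : ∀ x ∈ U, HasGradientAt s (gs x) x)
    (hHs : ∀ x ∈ U, HasFDerivAt gs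
      ((Matrix.toEuclideanLin (Hs x)).toContinuousLinearMap) x) :
    ∀ b ⊆ U, MeasurableSet b →
      volume (gs '' b) = ∫⁻ x in b, ENNReal.ofReal (Hs x).det ∂volume := by
  intro b hbU hbm
  set f' : EuclideanSpace ℝ (Fin d) → EuclideanSpace ℝ (Fin d) →L[ℝ] EuclideanSpace ℝ (Fin d) :=
    fun x => (Matrix.toEuclideanLin (Hs x)).toContinuousLinearMap with hf'def
  have hmono : ∀ x ∈ U, ∀ y ∈ U, ⟪gs x, y - x⟫_ℝ ≤ ⟪gs y, y - x⟫_ℝ :=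
    fun x hx y hy => grad_mono hUc hs hgs hx hy
  have hsymm : ∀ x ∈ U, ∀ v w, ⟪f' x v, w⟫_ℝ = ⟪f' x w, v⟫_ℝ :=
    fun x hx => hess_symm hUo hgs hx (hHs x hx)
  have hpsd : ∀ x ∈ U, ∀ v, 0 ≤ ⟪v, f' x v⟫_ℝ :=
    fun x hx => qform_nonneg hUo hmono hx (hHs x hx)
  have hdet_nonneg : ∀ x ∈ U, 0 ≤ (Hs x).det := by
    intro x hx
    have hP : (Hs x).PosSemidef := psd_of_qform (fun v w => hsymm x hx v w) (fun v => hpsd x hx v)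
    exact posSemidef_det_nonneg hP
  set O : Set (EuclideanSpace ℝ (Fin d)) := U ∩ (fun x => (Hs x).det) ⁻¹' Ioi 0 with hOdef
  have hO : IsOpen O :=
    (det_hess_continuousOn hUo hsC2 hgs hHs).isOpen_inter_preimage hUo isOpen_Ioi
  set A : Set (EuclideanSpace ℝ (Fin d)) := b ∩ O with hAdef
  set B : Set (EuclideanSpace ℝ (Fin d)) := b \ O with hBdef
  have hAm : MeasurableSet A := hbm.inter hO.measurableSet
  have hBm : MeasurableSet B := hbm.diff hO.measurableSet
  have hAU : A ⊆ U := fun x hx => hbU hx.1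
  have hBU : B ⊆ U := fun x hx => hbU hx.1
  have hdetB : ∀ x ∈ B, (Hs x).det = 0 := by
    intro x hx
    have h1 : ¬ (0 < (Hs x).det) := by
      intro h
      exact hx.2 ⟨hbU hx.1, h⟩
    have h2 := hdet_nonneg x (hBU hx)
    linarith [lt_or_eq_of_le h2]
  have hInj : Set.InjOn gs A := by
    intro x hxA y hyA hgxy
    by_contra hne
    have hxU : x ∈ U := hAU hxA
    have hyU : y ∈ U := hAU hyA
    have hq := qform_zero hUc hmono hxU hyU (hHs x hxU) hgxy
    have hMv0 : f' x (y - x) = 0 :=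
      apply_eq_zero_of_qform_eq_zero (fun v w => hsymm x hxU v w) (fun v => hpsd x hxU v) hq
    have hvne : y - x ≠ 0 := sub_ne_zero.mpr (Ne.symm hne)
    have hdet0 : (Hs x).det = 0 := det_eq_zero_of_apply_eq_zero hvne hMv0
    have : (0:ℝ) < (Hs x).det := hxA.2.2
    linarith
  have hderivA : ∀ x ∈ A, HasFDerivWithinAt gs (f' x) A x :=
    fun x hx => (hHs x (hAU hx)).hasFDerivWithinAt
  have hderivB : ∀ x ∈ B, HasFDerivWithinAt gs (f' x) B x :=
    fun x hx => (hHs x (hBU hx)).hasFDerivWithinAt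
  have hdetclm : ∀ x, (f' x).det = (Hs x).det := fun x => det_clm_eq (Hs x)
  -- image of B is null
  have hB0 : volume (gs '' B) = 0 := by
    have h1 := addHaar_image_le_lintegral_abs_det_fderiv volume hBm hderivB
    have h2 : ∫⁻ x in B, ENNReal.ofReal |(f' x).det| ∂volume = 0 := by
      rw [setLIntegral_congr_fun hBm
        (fun x hx => by rw [hdetclm x, hdetB x hx, abs_zero, ENNReal.ofReal_zero])]
      simp
    exact le_antisymm (h1.trans_eq h2) zero_le
  -- image of A
  have hAvol : volume (gs '' A) = ∫⁻ x in A, ENNReal.ofReal (Hs x).det ∂volume := by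
    rw [← lintegral_abs_det_fderiv_eq_addHaar_image volume hAm hderivA hInj]
    refine setLIntegral_congr_fun hAm (fun x hx => ?_)
    rw [hdetclm x, abs_of_pos hx.2.2]
  -- split b
  have hbsplit : b = A ∪ B := (Set.inter_union_diff b O).symm
  have hdisj : Disjoint A B :=
    (disjoint_sdiff_right : Disjoint O (b \ O)).mono_left Set.inter_subset_right
  calc volume (gs '' b) = volume (gs '' A ∪ gs '' B) := by rw [hbsplit, Set.image_union]
    _ = volume (gs '' A) := by
        apply le_antisymm
        · calc volume (gs '' A ∪ gs '' B) ≤ volume (gs '' A) + volume (gs '' B) :=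
              measure_union_le _ _
            _ = volume (gs '' A) := by rw [hB0, add_zero]
        · exact measure_mono Set.subset_union_left
    _ = ∫⁻ x in A, ENNReal.ofReal (Hs x).det ∂volume := hAvol
    _ = ∫⁻ x in A, ENNReal.ofReal (Hs x).det ∂volume
        + ∫⁻ x in B, ENNReal.ofReal (Hs x).det ∂volume := by
        have : ∫⁻ x in B, ENNReal.ofReal (Hs x).det ∂volume = 0 := by
          rw [setLIntegral_congr_fun hBm
            (fun x hx => by rw [hdetB x hx, ENNReal.ofReal_zero])]
          simp
        rw [this, add_zero]
    _ = ∫⁻ x in b, ENNReal.ofReal (Hs x).det ∂volume := by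
        rw [hbsplit, lintegral_union hBm hdisj]


end
end
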